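/- (Extended Prékopa-Leindler inequality) Let X be a convex space with σ-algebra Σ, p ∈ (0,1), and let μ, ν, ω be σ-finite measures on X such that μ(C) ≥ ν(A)^p ω(B)^{1-p} whenever A, B, C ∈ Σ with C ⊇ A +_p B. Let f, g, h be nonnegative measurable functions on X with f(p·x+(1-p)·y) ≥ g(x)^p h(y)^{1-p} for all x, y ∈ X. Then ∫ f dμ ≥ (∫ g dν)^p (∫ h dω)^{1-p}. -/

import Mathlib

/-!
Writing every integral in logarithmic layer-cake form, `∫ f dμ = ∫ eᵗ μ{f > eᵗ} dt`, the
hypothesis on the measures, applied to the superlevel sets `{g > eᵘ}`, `{h > eᵛ}` and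
`{f > e^(pu + (1-p)v)}`, turns the pointwise hypothesis on `f, g, h` into the hypothesis of the
one-dimensional Prékopa–Leindler inequality for the three functions `t ↦ eᵗ μ{f > eᵗ}`, ….
That inequality is proved by truncating to bounded functions, writing their integrals by the
layer-cake formula at heights proportional to their suprema, and comparing the superlevel sets by
the one-dimensional Brunn–Minkowski inequality `|A + B| ≥ |A| + |B|` and weighted AM–GM.
-/

open Set MeasureTheory ENNReal Filter Topology Pointwise
open scoped NNReal

namespace ENNReal

theorem geom_mean_le_arith_mean2_weighted {p q : ℝ} (hp : 0 < p) (hq : 0 < q)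
    (hpq : p + q = 1) (a b : ℝ≥0∞) :
    a ^ p * b ^ q ≤ ENNReal.ofReal p * a + ENNReal.ofReal q * b := by
  rcases eq_or_ne a ∞ with rfl | ha
  · simp [ENNReal.mul_top, hp]
  rcases eq_or_ne b ∞ with rfl | hb
  · simp [ENNReal.mul_top, hq]
  lift a to ℝ≥0 using ha
  lift b to ℝ≥0 using hb
  have := NNReal.geom_mean_le_arith_mean2_weighted p.toNNReal q.toNNReal a b
    (by rw [← Real.toNNReal_add hp.le hq.le, hpq, Real.toNNReal_one])
  rw [Real.coe_toNNReal _ hp.le, Real.coe_toNNReal _ hq.le] at this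
  rw [← coe_rpow_of_nonneg _ hp.le, ← coe_rpow_of_nonneg _ hq.le]
  unfold ENNReal.ofReal
  exact_mod_cast this

theorem rpow_mul_rpow_lt_rpow_mul_rpow {p q : ℝ} (hp : 0 < p) (hq : 0 ≤ q) {a b c d : ℝ≥0∞}
    (hb : b ≠ 0) (hac : a < c) (hbd : b < d) : a ^ p * b ^ q < c ^ p * d ^ q :=
  calc a ^ p * b ^ q < c ^ p * b ^ q :=
        ENNReal.mul_lt_mul_left (rpow_pos (pos_iff_ne_zero.2 hb) hbd.ne_top).ne'
          (rpow_ne_top_of_nonneg hq hbd.ne_top) (rpow_lt_rpow hac hp)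
    _ ≤ c ^ p * d ^ q := by gcongr

theorem ofReal_rpow_mul_ofReal_rpow {x y : ℝ} (hx : 0 < x) (hy : 0 < y) (p q : ℝ) :
    ENNReal.ofReal x ^ p * ENNReal.ofReal y ^ q = ENNReal.ofReal (x ^ p * y ^ q) := by
  rw [ofReal_rpow_of_pos hx, ofReal_rpow_of_pos hy, ← ofReal_mul (by positivity)]

end ENNReal

theorem nonempty_setOf_ofReal_mul_lt_iff {α : Type*} {f : α → ℝ≥0∞} {a : ℝ} (ha : 0 < a)
    (hf : ⨆ x, f x = ENNReal.ofReal a) (r : ℝ) :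
    {x | ENNReal.ofReal (a * r) < f x}.Nonempty ↔ r < 1 := by
  rw [← mul_lt_iff_lt_one_right ha, ← ofReal_lt_ofReal_iff ha, ← hf, lt_iSup_iff]
  rfl

namespace MeasureTheory

variable {α : Type*} [MeasurableSpace α]

theorem antitone_meas_ofReal_lt (μ : Measure α) (f : α → ℝ≥0∞) :
    Antitone fun t : ℝ => μ {x | ENNReal.ofReal t < f x} := fun _ _ hst =>
  measure_mono fun _ hx => (ofReal_le_ofReal hst).trans_lt hx

theorem tendsto_lintegral_min_natCast (μ : Measure α) {f : α → ℝ≥0∞} (hf : AEMeasurable f μ) :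
    Tendsto (fun n : ℕ => ∫⁻ x, min (f x) n ∂μ) atTop (𝓝 (∫⁻ x, f x ∂μ)) :=
  lintegral_tendsto_of_tendsto_of_monotone (fun _ => hf.min aemeasurable_const)
    (ae_of_all _ fun _ _ _ hmn => min_le_min_left _ (Nat.cast_le.2 hmn))
    (ae_of_all _ fun x => by simpa using tendsto_const_nhds.min tendsto_nat_nhds_top)

theorem lintegral_eq_lintegral_meas_ofReal_lt (μ : Measure α) {f : α → ℝ≥0∞}
    (hf : AEMeasurable f μ) :
    ∫⁻ x, f x ∂μ = ∫⁻ t in Ioi 0, μ {x | ENNReal.ofReal t < f x} := by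
  by_cases htop : μ {x | f x = ∞} = 0
  · have hfin : ∀ᵐ x ∂μ, f x ≠ ∞ := measure_eq_zero_iff_ae_notMem.1 htop
    calc ∫⁻ x, f x ∂μ = ∫⁻ x, ENNReal.ofReal (f x).toReal ∂μ :=
          lintegral_congr_ae <| hfin.mono fun x hx => (ofReal_toReal hx).symm
      _ = ∫⁻ t in Ioi 0, μ {x | t < (f x).toReal} :=
          lintegral_eq_lintegral_meas_lt μ (ae_of_all _ fun _ => toReal_nonneg) hf.ennreal_toReal
      _ = ∫⁻ t in Ioi 0, μ {x | ENNReal.ofReal t < f x} :=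
          setLIntegral_congr_fun measurableSet_Ioi fun t ht => measure_congr <|
            eventuallyEq_set.2 <| hfin.mono fun x hx =>
              (ofReal_lt_iff_lt_toReal (le_of_lt ht) hx).symm
  · refine (lintegral_eq_top_of_measure_eq_top_ne_zero hf htop).trans (top_le_iff.1 ?_).symm
    calc ∞ = ∫⁻ _ in Ioi (0 : ℝ), μ {x | f x = ∞} := by simp [htop]
      _ ≤ ∫⁻ t in Ioi 0, μ {x | ENNReal.ofReal t < f x} :=
          lintegral_mono fun t => measure_mono fun x hx => by simp_all

theorem lintegral_Ioi_eq_ofReal_mul_lintegral_comp_mul {c : ℝ} (hc : 0 < c) (F : ℝ → ℝ≥0∞) :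
    ∫⁻ t in Ioi 0, F t = ENNReal.ofReal c * ∫⁻ r in Ioi 0, F (c * r) := by
  have himg : (c * ·) '' Ioi 0 = Ioi 0 := by simp [image_mul_left_Ioi hc]
  nth_rewrite 1 [← himg]
  rw [lintegral_image_eq_lintegral_abs_deriv_mul measurableSet_Ioi
    (fun r _ => (hasDerivAt_const_mul c).hasDerivWithinAt) (mul_right_injective₀ hc.ne').injOn,
    abs_of_pos hc, lintegral_const_mul' _ _ ofReal_ne_top]

theorem lintegral_eq_ofReal_mul_lintegral_meas_ofReal_mul_lt (μ : Measure α)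
    {f : α → ℝ≥0∞} (hf : AEMeasurable f μ) {c : ℝ} (hc : 0 < c) :
    ∫⁻ x, f x ∂μ = ENNReal.ofReal c * ∫⁻ r in Ioi 0, μ {x | ENNReal.ofReal (c * r) < f x} := by
  rw [lintegral_eq_lintegral_meas_ofReal_lt μ hf,
    lintegral_Ioi_eq_ofReal_mul_lintegral_comp_mul hc]

end MeasureTheory

namespace Real

theorem volume_add_volume_le_volume_add_of_isCompact {K L : Set ℝ} (hK : IsCompact K)
    (hL : IsCompact L) (hK₀ : K.Nonempty) (hL₀ : L.Nonempty) :
    volume K + volume L ≤ volume (K + L) := by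
  obtain ⟨k, hkK, hk⟩ := hK.exists_isGreatest hK₀
  obtain ⟨l, hlL, hl⟩ := hL.exists_isLeast hL₀
  have hinter : (K + {l}) ∩ ({k} + L) ⊆ {k + l} := by
    rintro _ ⟨⟨x, hx, _, rfl, rfl⟩, ⟨_, rfl, y, hy, hxy⟩⟩
    have := hk hx
    have := hl hy
    simp only [mem_singleton_iff]
    linarith
  calc volume K + volume L = volume (K + {l}) + volume ({k} + L) := by
        simp only [add_singleton, singleton_add, image_add_right, image_add_left,
          measure_preimage_add_right, measure_preimage_add]
    _ = volume ((K + {l}) ∪ ({k} + L)) := by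
        rw [← measure_union_add_inter _ ((isCompact_singleton.add hL).measurableSet),
          measure_mono_null hinter (measure_singleton _), add_zero]
    _ ≤ volume (K + L) := measure_mono <| union_subset
        (add_subset_add_left (singleton_subset_iff.2 hlL))
        (add_subset_add_right (singleton_subset_iff.2 hkK))

theorem volume_add_volume_le_volume_add {s t : Set ℝ} (hs : MeasurableSet s)
    (ht : MeasurableSet t) (hs₀ : s.Nonempty) (ht₀ : t.Nonempty) :
    volume s + volume t ≤ volume (s + t) := by
  obtain ⟨a, ha⟩ := hs₀
  obtain ⟨b, hb⟩ := ht₀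
  have hcpt : ∀ u : Set ℝ, MeasurableSet u →
      volume u = ⨆ (K) (_ : K ⊆ u ∧ IsCompact K), volume K := fun u hu => by
    simp_rw [iSup_and, hu.measure_eq_iSup_isCompact]
  rw [hcpt s hs, hcpt t ht]
  refine biSup_add_biSup_le' ⟨∅, empty_subset _, isCompact_empty⟩
    ⟨∅, empty_subset _, isCompact_empty⟩ fun K ⟨hKs, hK⟩ L ⟨hLt, hL⟩ => ?_
  calc volume K + volume L ≤ volume (insert a K) + volume (insert b L) := by
        gcongr <;> exact subset_insert _ _
    _ ≤ volume (insert a K + insert b L) :=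
        volume_add_volume_le_volume_add_of_isCompact (hK.insert a) (hL.insert b)
          (insert_nonempty _ _) (insert_nonempty _ _)
    _ ≤ volume (s + t) :=
        measure_mono <| add_subset_add (insert_subset ha hKs) (insert_subset hb hLt)

theorem ofReal_mul_volume_add_ofReal_mul_volume_le {p q : ℝ} (hp : 0 ≤ p) (hq : 0 ≤ q)
    {s t : Set ℝ} (hs : MeasurableSet s) (ht : MeasurableSet t) (hs₀ : s.Nonempty)
    (ht₀ : t.Nonempty) :
    ENNReal.ofReal p * volume s + ENNReal.ofReal q * volume t ≤ volume (p • s + q • t) := by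
  have hscale (r : ℝ) (hr : 0 ≤ r) (u : Set ℝ) : volume (r • u) = ENNReal.ofReal r * volume u := by
    simpa using Measure.addHaar_smul_of_nonneg volume hr u
  rw [← hscale p hp, ← hscale q hq]
  exact volume_add_volume_le_volume_add (hs.const_smul₀ p) (ht.const_smul₀ q) hs₀.smul_set
    ht₀.smul_set

theorem ofReal_mul_volume_superlevel_add_le {p : ℝ} (hp : p ∈ Ioo (0 : ℝ) 1)
    {φ γ η : ℝ → ℝ≥0∞} (hγ : Measurable γ) (hη : Measurable η) {a b : ℝ} (ha : 0 < a)
    (hb : 0 < b) (hγa : ⨆ u, γ u = ENNReal.ofReal a) (hηb : ⨆ v, η v = ENNReal.ofReal b)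
    (h : ∀ u v, γ u ^ p * η v ^ (1 - p) ≤ φ (p * u + (1 - p) * v)) {r : ℝ} (hr : 0 < r) :
    ENNReal.ofReal p * volume {u | ENNReal.ofReal (a * r) < γ u} +
        ENNReal.ofReal (1 - p) * volume {v | ENNReal.ofReal (b * r) < η v} ≤
      volume {w | ENNReal.ofReal (a ^ p * b ^ (1 - p) * r) < φ w} := by
  have hq₀ : 0 < 1 - p := sub_pos.2 hp.2
  have hA := nonempty_setOf_ofReal_mul_lt_iff ha hγa r
  have hB := nonempty_setOf_ofReal_mul_lt_iff hb hηb r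
  by_cases hr₁ : r < 1
  · refine (ofReal_mul_volume_add_ofReal_mul_volume_le hp.1.le hq₀.le
      (measurableSet_lt measurable_const hγ) (measurableSet_lt measurable_const hη)
      (hA.2 hr₁) (hB.2 hr₁)).trans (measure_mono ?_)
    rintro _ ⟨_, ⟨u, hu, rfl⟩, _, ⟨v, hv, rfl⟩, rfl⟩
    refine lt_of_lt_of_le ?_ (h u v)
    have hmean : a ^ p * b ^ (1 - p) * r = (a * r) ^ p * (b * r) ^ (1 - p) := by
      rw [mul_rpow ha.le hr.le, mul_rpow hb.le hr.le, mul_mul_mul_comm, ← rpow_add hr]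
      simp
    rw [hmean, ← ENNReal.ofReal_rpow_mul_ofReal_rpow (by positivity) (by positivity)]
    exact rpow_mul_rpow_lt_rpow_mul_rpow hp.1 hq₀.le (ofReal_pos.2 (mul_pos hb hr)).ne' hu hv
  · simp [not_nonempty_iff_eq_empty.1 (mt hA.1 hr₁), not_nonempty_iff_eq_empty.1 (mt hB.1 hr₁)]

/- Rescaling by the suprema makes the superlevel sets of `γ` and `η` at the same relative
height `r` nonempty for the same `r`, namely `r < 1`, as Brunn–Minkowski requires. -/
theorem prekopa_leindler_of_iSup_ne_top {p : ℝ} (hp : p ∈ Ioo (0 : ℝ) 1) {φ γ η : ℝ → ℝ≥0∞}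
    (hφ : Measurable φ) (hγ : Measurable γ) (hη : Measurable η)
    (hγ_bdd : ⨆ u, γ u ≠ ∞) (hη_bdd : ⨆ v, η v ≠ ∞)
    (h : ∀ u v, γ u ^ p * η v ^ (1 - p) ≤ φ (p * u + (1 - p) * v)) :
    (∫⁻ u, γ u) ^ p * (∫⁻ v, η v) ^ (1 - p) ≤ ∫⁻ w, φ w := by
  have hq₀ : 0 < 1 - p := sub_pos.2 hp.2
  rcases eq_or_ne (⨆ u, γ u) 0 with hγ₀ | hγ₀
  · simp [show γ = 0 from funext (iSup_eq_zero.1 hγ₀), hp.1]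
  rcases eq_or_ne (⨆ v, η v) 0 with hη₀ | hη₀
  · simp [show η = 0 from funext (iSup_eq_zero.1 hη₀), hq₀]
  set a := (⨆ u, γ u).toReal
  set b := (⨆ v, η v).toReal
  have ha : 0 < a := toReal_pos hγ₀ hγ_bdd
  have hb : 0 < b := toReal_pos hη₀ hη_bdd
  set c := a ^ p * b ^ (1 - p)
  have hc : 0 < c := by positivity
  set G := fun r => volume {u | ENNReal.ofReal (a * r) < γ u}
  set H := fun r => volume {v | ENNReal.ofReal (b * r) < η v}
  set Φ := fun r => volume {w | ENNReal.ofReal (c * r) < φ w}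
  calc (∫⁻ u, γ u) ^ p * (∫⁻ v, η v) ^ (1 - p)
      = (ENNReal.ofReal a * ∫⁻ r in Ioi 0, G r) ^ p *
          (ENNReal.ofReal b * ∫⁻ r in Ioi 0, H r) ^ (1 - p) := by
        rw [lintegral_eq_ofReal_mul_lintegral_meas_ofReal_mul_lt volume hγ.aemeasurable ha,
          lintegral_eq_ofReal_mul_lintegral_meas_ofReal_mul_lt volume hη.aemeasurable hb]
    _ = ENNReal.ofReal c * ((∫⁻ r in Ioi 0, G r) ^ p * (∫⁻ r in Ioi 0, H r) ^ (1 - p)) := by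
        rw [mul_rpow_of_nonneg _ _ hp.1.le, mul_rpow_of_nonneg _ _ hq₀.le, mul_mul_mul_comm,
          ofReal_rpow_mul_ofReal_rpow ha hb]
    _ ≤ ENNReal.ofReal c * (ENNReal.ofReal p * (∫⁻ r in Ioi 0, G r) +
          ENNReal.ofReal (1 - p) * ∫⁻ r in Ioi 0, H r) :=
        mul_le_mul_right
          (ENNReal.geom_mean_le_arith_mean2_weighted hp.1 hq₀ (add_sub_cancel p 1) _ _) _
    _ = ENNReal.ofReal c * ((∫⁻ r in Ioi 0, ENNReal.ofReal p * G r) +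
          ∫⁻ r in Ioi 0, ENNReal.ofReal (1 - p) * H r) := by
        rw [lintegral_const_mul' _ _ ofReal_ne_top, lintegral_const_mul' _ _ ofReal_ne_top]
    _ ≤ ENNReal.ofReal c *
          ∫⁻ r in Ioi 0, ENNReal.ofReal p * G r + ENNReal.ofReal (1 - p) * H r :=
        mul_le_mul_right (le_lintegral_add _ _) _
    _ ≤ ENNReal.ofReal c * ∫⁻ r in Ioi 0, Φ r :=
        mul_le_mul_right (setLIntegral_mono' measurableSet_Ioi fun r hr =>
          ofReal_mul_volume_superlevel_add_le hp hγ hη ha hb (ofReal_toReal hγ_bdd).symm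
            (ofReal_toReal hη_bdd).symm h hr) _
    _ = ∫⁻ w, φ w :=
        (lintegral_eq_ofReal_mul_lintegral_meas_ofReal_mul_lt volume hφ.aemeasurable hc).symm

theorem prekopa_leindler {p : ℝ} (hp : p ∈ Ioo (0 : ℝ) 1) {φ γ η : ℝ → ℝ≥0∞}
    (hφ : Measurable φ) (hγ : Measurable γ) (hη : Measurable η)
    (h : ∀ u v, γ u ^ p * η v ^ (1 - p) ≤ φ (p * u + (1 - p) * v)) :
    (∫⁻ u, γ u) ^ p * (∫⁻ v, η v) ^ (1 - p) ≤ ∫⁻ w, φ w := by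
  have hq₀ : 0 < 1 - p := sub_pos.2 hp.2
  rcases eq_or_ne (∫⁻ u, γ u) 0 with hγ₀ | hγ₀
  · simp [hγ₀, hp.1]
  rcases eq_or_ne (∫⁻ v, η v) 0 with hη₀ | hη₀
  · simp [hη₀, hq₀]
  have hmin_bdd (ψ : ℝ → ℝ≥0∞) (n : ℕ) : ⨆ u, min (ψ u) n ≠ ∞ :=
    ne_top_of_le_ne_top (natCast_ne_top n) (iSup_le fun _ => min_le_right _ _)
  have htrunc (n : ℕ) :
      (∫⁻ u, min (γ u) n) ^ p * (∫⁻ v, min (η v) n) ^ (1 - p) ≤ ∫⁻ w, φ w :=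
    prekopa_leindler_of_iSup_ne_top hp hφ (hγ.min measurable_const) (hη.min measurable_const)
      (hmin_bdd γ n) (hmin_bdd η n) fun u v =>
        (mul_le_mul' (ENNReal.rpow_le_rpow (min_le_left _ _) hp.1.le)
          (ENNReal.rpow_le_rpow (min_le_left _ _) hq₀.le)).trans (h u v)
  have hlim : Tendsto (fun n : ℕ => (∫⁻ u, min (γ u) n) ^ p * (∫⁻ v, min (η v) n) ^ (1 - p))
      atTop (𝓝 ((∫⁻ u, γ u) ^ p * (∫⁻ v, η v) ^ (1 - p))) :=
    ENNReal.Tendsto.mul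
      ((ENNReal.continuous_rpow_const.tendsto _).comp
        (tendsto_lintegral_min_natCast _ hγ.aemeasurable))
      (Or.inl (by simp [hγ₀, hp.1.le]))
      ((ENNReal.continuous_rpow_const.tendsto _).comp
        (tendsto_lintegral_min_natCast _ hη.aemeasurable))
      (Or.inl (by simp [hη₀, hp.2.le]))
  exact le_of_tendsto' hlim htrunc

end Real

section ExpLayer

variable {α : Type*} [MeasurableSpace α]

noncomputable def expLayer (μ : Measure α) (f : α → ℝ≥0∞) (t : ℝ) : ℝ≥0∞ :=
  ENNReal.ofReal (Real.exp t) * μ {x | ENNReal.ofReal (Real.exp t) < f x}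

theorem measurable_expLayer (μ : Measure α) (f : α → ℝ≥0∞) : Measurable (expLayer μ f) :=
  (ENNReal.measurable_ofReal.comp Real.measurable_exp).mul
    ((antitone_meas_ofReal_lt μ f).comp_monotone Real.exp_monotone).measurable

theorem lintegral_expLayer (μ : Measure α) {f : α → ℝ≥0∞} (hf : AEMeasurable f μ) :
    ∫⁻ t, expLayer μ f t = ∫⁻ x, f x ∂μ := by
  rw [lintegral_eq_lintegral_meas_ofReal_lt μ hf, ← Real.range_exp, ← image_univ,
    lintegral_image_eq_lintegral_abs_deriv_mul MeasurableSet.univ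
      (fun t _ => (Real.hasDerivAt_exp t).hasDerivWithinAt) Real.exp_injective.injOn,
    Measure.restrict_univ]
  simp only [expLayer, abs_of_pos (Real.exp_pos _)]

end ExpLayer

theorem expLayer_rpow_mul_expLayer_rpow_le {E : Type*} [AddCommGroup E] [Module ℝ E]
    [MeasurableSpace E] {p : ℝ} (hp : p ∈ Ioo (0 : ℝ) 1) {μ ν ω : Measure E}
    (hmeas : ∀ A B C : Set E, MeasurableSet A → MeasurableSet B → MeasurableSet C →
      {z | ∃ a ∈ A, ∃ b ∈ B, z = p • a + (1 - p) • b} ⊆ C →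
      μ C ≥ ν A ^ p * ω B ^ (1 - p))
    {f g h : E → ℝ≥0∞} (hf : Measurable f) (hg : Measurable g) (hh : Measurable h)
    (hpl : ∀ x y : E, f (p • x + (1 - p) • y) ≥ g x ^ p * h y ^ (1 - p)) (u v : ℝ) :
    expLayer ν g u ^ p * expLayer ω h v ^ (1 - p) ≤ expLayer μ f (p * u + (1 - p) * v) := by
  have hq₀ : 0 < 1 - p := sub_pos.2 hp.2
  set X := ENNReal.ofReal (Real.exp u)
  set Y := ENNReal.ofReal (Real.exp v)
  have hexp : ENNReal.ofReal (Real.exp (p * u + (1 - p) * v)) = X ^ p * Y ^ (1 - p) := by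
    rw [ofReal_rpow_mul_ofReal_rpow (Real.exp_pos u) (Real.exp_pos v), ← Real.exp_mul,
      ← Real.exp_mul, ← Real.exp_add, mul_comm u, mul_comm v]
  have hsub : {z | ∃ a ∈ {x | X < g x}, ∃ b ∈ {y | Y < h y}, z = p • a + (1 - p) • b} ⊆
      {z | ENNReal.ofReal (Real.exp (p * u + (1 - p) * v)) < f z} := by
    rintro _ ⟨x, hx, y, hy, rfl⟩
    change _ < f _
    rw [hexp]
    exact (rpow_mul_rpow_lt_rpow_mul_rpow hp.1 hq₀.le (ofReal_pos.2 (Real.exp_pos v)).ne' hx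
      hy).trans_le (hpl x y)
  calc expLayer ν g u ^ p * expLayer ω h v ^ (1 - p)
      = X ^ p * Y ^ (1 - p) * (ν {x | X < g x} ^ p * ω {y | Y < h y} ^ (1 - p)) := by
        simp only [expLayer, mul_rpow_of_nonneg _ _ hp.1.le, mul_rpow_of_nonneg _ _ hq₀.le, X, Y]
        ring
    _ ≤ X ^ p * Y ^ (1 - p) * μ {z | ENNReal.ofReal (Real.exp (p * u + (1 - p) * v)) < f z} :=
        mul_le_mul_right (hmeas _ _ _ (measurableSet_lt measurable_const hg)
          (measurableSet_lt measurable_const hh) (measurableSet_lt measurable_const hf) hsub) _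
    _ = expLayer μ f (p * u + (1 - p) * v) := by rw [← hexp, expLayer]

theorem extended_prekopa_leindler_general
    {E : Type*} [AddCommGroup E] [Module ℝ E] [MeasurableSpace E]
    (p : ℝ) (hp : p ∈ Ioo (0:ℝ) 1)
    (μ ν ω : Measure E)
    (hmeas : ∀ A B C : Set E, MeasurableSet A → MeasurableSet B → MeasurableSet C →
      {z | ∃ a ∈ A, ∃ b ∈ B, z = p • a + (1 - p) • b} ⊆ C →
      μ C ≥ ν A ^ p * ω B ^ (1 - p))
    (f g h : E → ℝ≥0∞) (hf : Measurable f) (hg : Measurable g) (hh : Measurable h)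
    (hpl : ∀ x y : E, f (p • x + (1 - p) • y) ≥ g x ^ p * h y ^ (1 - p)) :
    ∫⁻ x, f x ∂μ ≥ (∫⁻ x, g x ∂ν) ^ p * (∫⁻ x, h x ∂ω) ^ (1 - p) := by
  rw [ge_iff_le, ← lintegral_expLayer μ hf.aemeasurable, ← lintegral_expLayer ν hg.aemeasurable,
    ← lintegral_expLayer ω hh.aemeasurable]
  exact Real.prekopa_leindler hp (measurable_expLayer μ f) (measurable_expLayer ν g)
    (measurable_expLayer ω h) (expLayer_rpow_mul_expLayer_rpow_le hp hmeas hf hg hh hpl)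

/-- Extended Prékopa–Leindler inequality for log-concave-type measures on a
convex space. -/
theorem extended_prekopa_leindler
    {E : Type*} [AddCommGroup E] [Module ℝ E] [MeasurableSpace E]
    (p : ℝ) (hp : p ∈ Ioo (0:ℝ) 1)
    (μ ν ω : Measure E) [SigmaFinite μ] [SigmaFinite ν] [SigmaFinite ω]
    (hmeas : ∀ A B C : Set E, MeasurableSet A → MeasurableSet B → MeasurableSet C →
      {z | ∃ a ∈ A, ∃ b ∈ B, z = p • a + (1 - p) • b} ⊆ C →
      μ C ≥ ν A ^ p * ω B ^ (1 - p))
    (f g h : E → ℝ≥0∞) (hf : Measurable f) (hg : Measurable g) (hh : Measurable h)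
    (hpl : ∀ x y : E, f (p • x + (1 - p) • y) ≥ g x ^ p * h y ^ (1 - p)) :
    ∫⁻ x, f x ∂μ ≥ (∫⁻ x, g x ∂ν) ^ p * (∫⁻ x, h x ∂ω) ^ (1 - p) :=
  extended_prekopa_leindler_general p hp μ ν ω hmeas f g h hf hg hh hpl
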